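/- Assume 𝒜𝒜* is invertible, let γ > 0, and let (Xᵏ, yᵏ, Sᵏ) be generated by the exact classical ADMM iteration. Define the gap function Q((X', y', S'), (X, y, S)) = −bᵀy' + ⟨X, 𝒜*(y') + S' − C⟩ + bᵀy − ⟨X', 𝒜*(y) + S − C⟩. Then for every k ≥ 0, every X ∈ 𝕊^n, every y ∈ ℝ^m, and every positive semidefinite S ∈ 𝕊^n: Q((X^{k+1}, y^{k+1}, S^{k+1}), (X, y, S)) ≤ (γ/2)(‖Xᵏ − X‖_F² − ‖X^{k+1} − X‖_F²) + (1/(2γ))(‖𝒜*(y) + Sᵏ − C‖_F² − ‖𝒜*(y) + S^{k+1} − C‖_F²). -/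

import Mathlib

open Matrix

namespace QADMM

variable {n m : ℕ}

/-- Trace inner product `⟨A,B⟩ = Tr(AᵀB)`. -/
noncomputable def minner (A B : Matrix (Fin n) (Fin n) ℝ) : ℝ :=
  Matrix.trace (Aᵀ * B)

/-- Frobenius norm `‖X‖_F = √(Tr(Xᵀ X))`. -/
noncomputable def frob (X : Matrix (Fin n) (Fin n) ℝ) : ℝ :=
  Real.sqrt (Matrix.trace (Xᵀ * X))

/-- The linear map `𝒜(X) = (⟨A⁽¹⁾,X⟩, …, ⟨A⁽ᵐ⁾,X⟩)`. -/
noncomputable def Amap (A : Fin m → Matrix (Fin n) (Fin n) ℝ)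
    (X : Matrix (Fin n) (Fin n) ℝ) : Fin m → ℝ :=
  fun i => minner (A i) X

/-- The adjoint map `𝒜*(y) = Σᵢ yᵢ A⁽ⁱ⁾`. -/
noncomputable def Aadj (A : Fin m → Matrix (Fin n) (Fin n) ℝ)
    (y : Fin m → ℝ) : Matrix (Fin n) (Fin n) ℝ :=
  ∑ i, y i • A i

/-- The `m×m` matrix `𝒜𝒜*` with entries `⟨A⁽ⁱ⁾, A⁽ʲ⁾⟩`. -/
noncomputable def AAt (A : Fin m → Matrix (Fin n) (Fin n) ℝ) : Matrix (Fin m) (Fin m) ℝ :=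
  Matrix.of fun i j => minner (A i) (A j)

/-- `proj` is the Frobenius-metric projection onto the PSD cone: `proj Z` is positive
semidefinite and is a nearest PSD matrix to `Z` in Frobenius norm. -/
def IsProjPSD (proj : Matrix (Fin n) (Fin n) ℝ → Matrix (Fin n) (Fin n) ℝ) : Prop :=
  ∀ Z : Matrix (Fin n) (Fin n) ℝ,
    (proj Z).PosSemidef ∧
    ∀ W : Matrix (Fin n) (Fin n) ℝ, W.PosSemidef → frob (Z - proj Z) ≤ frob (Z - W)

/-- `(X*, y*, S*)` satisfies the SDP optimality conditions: primal feasibility, dual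
feasibility, and complementary slackness. -/
def OptCond (A : Fin m → Matrix (Fin n) (Fin n) ℝ) (C : Matrix (Fin n) (Fin n) ℝ)
    (b : Fin m → ℝ) (Xs : Matrix (Fin n) (Fin n) ℝ) (ys : Fin m → ℝ)
    (Ss : Matrix (Fin n) (Fin n) ℝ) : Prop :=
  Amap A Xs = b ∧ Xs.PosSemidef ∧ Aadj A ys + Ss = C ∧ Ss.PosSemidef ∧ Xs * Ss = 0

/-- The exact classical ADMM iteration for the dual SDP, with parameter `γ > 0`:
`y^{k+1} = −(𝒜𝒜*)⁻¹(γ(𝒜(Xᵏ) − b) + 𝒜(Sᵏ − C))`,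
`S^{k+1} = Proj_{𝕊₊ⁿ}(C − 𝒜*(y^{k+1}) − γXᵏ)`,
`X^{k+1} = Xᵏ + (1/γ)(𝒜*(y^{k+1}) + S^{k+1} − C)`. -/
def ADMMSeq (A : Fin m → Matrix (Fin n) (Fin n) ℝ) (C : Matrix (Fin n) (Fin n) ℝ)
    (b : Fin m → ℝ) (projPSD : Matrix (Fin n) (Fin n) ℝ → Matrix (Fin n) (Fin n) ℝ)
    (γ : ℝ) (X : ℕ → Matrix (Fin n) (Fin n) ℝ) (y : ℕ → Fin m → ℝ)
    (S : ℕ → Matrix (Fin n) (Fin n) ℝ) : Prop :=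
  ∀ k : ℕ,
    y (k + 1) = -((AAt A)⁻¹.mulVec (γ • (Amap A (X k) - b) + Amap A (S k - C))) ∧
    S (k + 1) = projPSD (C - Aadj A (y (k + 1)) - γ • X k) ∧
    X (k + 1) = X k + γ⁻¹ • (Aadj A (y (k + 1)) + S (k + 1) - C)

end QADMM

namespace QADMM


section API

variable {n m : ℕ}

lemma minner_comm (A B : Matrix (Fin n) (Fin n) ℝ) : minner A B = minner B A := by
  rw [minner, minner, ← Matrix.trace_transpose (Aᵀ * B), Matrix.transpose_mul,
    Matrix.transpose_transpose]

lemma minner_add_left (A B C : Matrix (Fin n) (Fin n) ℝ) :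
    minner (A + B) C = minner A C + minner B C := by
  rw [minner, minner, minner, Matrix.transpose_add, Matrix.add_mul, Matrix.trace_add]

lemma minner_add_right (A B C : Matrix (Fin n) (Fin n) ℝ) :
    minner A (B + C) = minner A B + minner A C := by
  rw [minner, minner, minner, Matrix.mul_add, Matrix.trace_add]

lemma minner_sub_left (A B C : Matrix (Fin n) (Fin n) ℝ) :
    minner (A - B) C = minner A C - minner B C := by
  rw [minner, minner, minner, Matrix.transpose_sub, Matrix.sub_mul, Matrix.trace_sub]

lemma minner_sub_right (A B C : Matrix (Fin n) (Fin n) ℝ) :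
    minner A (B - C) = minner A B - minner A C := by
  rw [minner, minner, minner, Matrix.mul_sub, Matrix.trace_sub]

lemma minner_smul_left (c : ℝ) (A B : Matrix (Fin n) (Fin n) ℝ) :
    minner (c • A) B = c * minner A B := by
  rw [minner, minner, Matrix.transpose_smul, Matrix.smul_mul, Matrix.trace_smul, smul_eq_mul]

lemma minner_smul_right (c : ℝ) (A B : Matrix (Fin n) (Fin n) ℝ) :
    minner A (c • B) = c * minner A B := by
  rw [minner, minner, Matrix.mul_smul, Matrix.trace_smul, smul_eq_mul]

lemma minner_sum_left {ι : Type*} (s : Finset ι) (f : ι → Matrix (Fin n) (Fin n) ℝ)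
    (B : Matrix (Fin n) (Fin n) ℝ) :
    minner (∑ i ∈ s, f i) B = ∑ i ∈ s, minner (f i) B := by
  rw [minner, Matrix.transpose_sum, Finset.sum_mul, Matrix.trace_sum]
  rfl

lemma minner_sum_right {ι : Type*} (s : Finset ι) (f : ι → Matrix (Fin n) (Fin n) ℝ)
    (B : Matrix (Fin n) (Fin n) ℝ) :
    minner B (∑ i ∈ s, f i) = ∑ i ∈ s, minner B (f i) := by
  rw [minner, Matrix.mul_sum, Matrix.trace_sum]
  rfl

lemma minner_eq_sum (A B : Matrix (Fin n) (Fin n) ℝ) :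
    minner A B = ∑ i, ∑ j, A j i * B j i := by
  rw [minner]
  simp [Matrix.trace, Matrix.diag, Matrix.mul_apply]

lemma minner_self_nonneg (A : Matrix (Fin n) (Fin n) ℝ) : 0 ≤ minner A A := by
  rw [minner_eq_sum]
  exact Finset.sum_nonneg fun i _ => Finset.sum_nonneg fun j _ => mul_self_nonneg _

lemma frob_sq (A : Matrix (Fin n) (Fin n) ℝ) : frob A ^ 2 = minner A A := by
  have h : (0:ℝ) ≤ (Aᵀ * A).trace := minner_self_nonneg A
  rw [frob, minner, Real.sq_sqrt h]

lemma frob_nonneg (A : Matrix (Fin n) (Fin n) ℝ) : 0 ≤ frob A := Real.sqrt_nonneg _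

lemma aadj_sub (A : Fin m → Matrix (Fin n) (Fin n) ℝ) (u v : Fin m → ℝ) :
    Aadj A (u - v) = Aadj A u - Aadj A v := by
  rw [Aadj, Aadj, Aadj, ← Finset.sum_sub_distrib]
  refine Finset.sum_congr rfl fun i _ => ?_
  rw [Pi.sub_apply, sub_smul]

lemma amap_dot (A : Fin m → Matrix (Fin n) (Fin n) ℝ) (a : Fin m → ℝ)
    (M : Matrix (Fin n) (Fin n) ℝ) :
    a ⬝ᵥ Amap A M = minner (Aadj A a) M := by
  rw [Aadj, minner_sum_left]
  simp [dotProduct, Amap, minner_smul_left]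

lemma mulVec_AAt (A : Fin m → Matrix (Fin n) (Fin n) ℝ) (v : Fin m → ℝ) :
    (AAt A) *ᵥ v = Amap A (Aadj A v) := by
  funext i
  show (∑ j, AAt A i j * v j) = minner (A i) (Aadj A v)
  rw [Aadj, minner_sum_right]
  simp [AAt, minner_smul_right, mul_comm]

lemma psd_smul {c : ℝ} (hc : 0 ≤ c) {M : Matrix (Fin n) (Fin n) ℝ} (hM : M.PosSemidef) :
    (c • M).PosSemidef := by
  refine Matrix.PosSemidef.of_dotProduct_mulVec_nonneg ?_ fun x => ?_
  · rw [Matrix.IsHermitian, Matrix.conjTranspose_smul, hM.1, star_trivial]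
  · rw [Matrix.smul_mulVec, dotProduct_smul, smul_eq_mul]
    exact mul_nonneg hc (hM.dotProduct_mulVec_nonneg x)

lemma proj_vi {proj : Matrix (Fin n) (Fin n) ℝ → Matrix (Fin n) (Fin n) ℝ}
    (hp : IsProjPSD proj) (Z W : Matrix (Fin n) (Fin n) ℝ) (hW : W.PosSemidef) :
    minner (Z - proj Z) (W - proj Z) ≤ 0 := by
  obtain ⟨hPSD, hmin⟩ := hp Z
  by_contra hcon
  push_neg at hcon
  set d := Z - proj Z with hd
  set e := W - proj Z with he
  have key : ∀ t : ℝ, 0 < t → t ≤ 1 → 2 * minner d e ≤ t * minner e e := by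
    intro t ht ht1
    have hWt : (proj Z + t • e).PosSemidef := by
      have h1 : ((1 - t) • proj Z + t • W).PosSemidef :=
        (psd_smul (by linarith) hPSD).add (psd_smul ht.le hW)
      have h2 : proj Z + t • e = (1 - t) • proj Z + t • W := by
        rw [he]; module
      rwa [h2]
    have hle := hmin _ hWt
    have hsq : frob d ^ 2 ≤ frob (Z - (proj Z + t • e)) ^ 2 := by
      nlinarith [frob_nonneg d, frob_nonneg (Z - (proj Z + t • e))]
    have hZP : Z - (proj Z + t • e) = d - t • e := by
      rw [hd]; module
    rw [hZP, frob_sq, frob_sq] at hsq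
    simp only [minner_sub_left, minner_sub_right, minner_smul_left, minner_smul_right] at hsq
    nlinarith [hsq, minner_comm d e]
  have hM := minner_self_nonneg e
  rcases eq_or_lt_of_le hM with h0 | h0
  · have h1 := key 1 one_pos le_rfl
    rw [← h0] at h1
    linarith
  · have htpos : 0 < min 1 (minner d e / minner e e) :=
      lt_min one_pos (div_pos hcon h0)
    have h1 := key _ htpos (min_le_left _ _)
    have h2 : min 1 (minner d e / minner e e) * minner e e ≤
        (minner d e / minner e e) * minner e e :=
      mul_le_mul_of_nonneg_right (min_le_right _ _) hM
    rw [div_mul_cancel₀ _ (ne_of_gt h0)] at h2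
    linarith

end API

/-- The primal-dual gap function
`Q((X',y',S'),(X,y,S)) = −bᵀy' + ⟨X, 𝒜*(y') + S' − C⟩ + bᵀy − ⟨X', 𝒜*(y) + S − C⟩`. -/
noncomputable def gapQ {n m : ℕ} (A : Fin m → Matrix (Fin n) (Fin n) ℝ)
    (C : Matrix (Fin n) (Fin n) ℝ) (b : Fin m → ℝ)
    (X' : Matrix (Fin n) (Fin n) ℝ) (y' : Fin m → ℝ) (S' : Matrix (Fin n) (Fin n) ℝ)
    (X : Matrix (Fin n) (Fin n) ℝ) (y : Fin m → ℝ) (S : Matrix (Fin n) (Fin n) ℝ) : ℝ :=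
  -(b ⬝ᵥ y') + minner X (Aadj A y' + S' - C) + b ⬝ᵥ y - minner X' (Aadj A y + S - C)

/-- one-step primal-dual gap inequality for the exact classical ADMM iteration:
for every `k`, every symmetric `X`, every `y` and every PSD `S`,
`Q((X^{k+1},y^{k+1},S^{k+1}),(X,y,S)) ≤ (γ/2)(‖Xᵏ−X‖² − ‖X^{k+1}−X‖²)
  + (1/(2γ))(‖𝒜*(y)+Sᵏ−C‖² − ‖𝒜*(y)+S^{k+1}−C‖²)`. -/
theorem admm_gap_inequality {n m : ℕ}
    (A : Fin m → Matrix (Fin n) (Fin n) ℝ) (hA : ∀ i, (A i).IsSymm)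
    (C : Matrix (Fin n) (Fin n) ℝ) (hC : C.IsSymm) (b : Fin m → ℝ)
    (hAAt : IsUnit (AAt A))
    (projPSD : Matrix (Fin n) (Fin n) ℝ → Matrix (Fin n) (Fin n) ℝ)
    (hproj : IsProjPSD projPSD)
    (γ : ℝ) (hγ : 0 < γ)
    (X : ℕ → Matrix (Fin n) (Fin n) ℝ) (y : ℕ → Fin m → ℝ)
    (S : ℕ → Matrix (Fin n) (Fin n) ℝ)
    (hX0 : (X 0).IsSymm) (hS0 : (S 0).IsSymm)
    (hseq : ADMMSeq A C b projPSD γ X y S) :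
    ∀ (k : ℕ) (X' : Matrix (Fin n) (Fin n) ℝ), X'.IsSymm → ∀ (y' : Fin m → ℝ)
      (S' : Matrix (Fin n) (Fin n) ℝ), S'.PosSemidef →
      gapQ A C b (X (k + 1)) (y (k + 1)) (S (k + 1)) X' y' S' ≤
        (γ / 2) * (frob (X k - X') ^ 2 - frob (X (k + 1) - X') ^ 2) +
        (1 / (2 * γ)) *
          (frob (Aadj A y' + S k - C) ^ 2 - frob (Aadj A y' + S (k + 1) - C) ^ 2) := by
  intro k X' hX' y' S' hS'
  obtain ⟨hy, hS, hX⟩ := hseq k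
  have hγ' : γ ≠ 0 := ne_of_gt hγ
  set Xk := X k with hXkd
  set X1 := X (k + 1) with hX1d
  set y1 := y (k + 1) with hy1dd
  set Sk := S k with hSkd
  set S1 := S (k + 1) with hS1d
  -- the X-update as a residual identity
  have f2 : Aadj A y1 + S1 - C = γ • (X1 - Xk) := by
    rw [hX, add_sub_cancel_left, smul_smul, mul_inv_cancel₀ hγ', one_smul]
  have hy1 : Aadj A y1 = γ • X1 - γ • Xk + C - S1 := by
    calc Aadj A y1 = (Aadj A y1 + S1 - C) + C - S1 := by abel
    _ = γ • (X1 - Xk) + C - S1 := by rw [f2]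
    _ = γ • X1 - γ • Xk + C - S1 := by rw [smul_sub]
  -- projection variational inequality
  have hvi : minner ((C - Aadj A y1 - γ • Xk) - projPSD (C - Aadj A y1 - γ • Xk))
      (S' - projPSD (C - Aadj A y1 - γ • Xk)) ≤ 0 := proj_vi hproj _ _ hS'
  rw [← hS] at hvi
  have hZ1 : (C - Aadj A y1 - γ • Xk) - S1 = (-γ) • X1 := by
    rw [hy1]; module
  rw [hZ1, minner_smul_left] at hvi
  have hproj' : 0 ≤ minner X1 (S' - S1) := by nlinarith [hvi, hγ]
  -- the y-update optimality condition
  have hAAty : Amap A (Aadj A y1) = -(γ • (Amap A Xk - b) + Amap A (Sk - C)) := by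
    rw [← mulVec_AAt, hy, Matrix.mulVec_neg, Matrix.mulVec_mulVec,
      Matrix.mul_nonsing_inv _ ((Matrix.isUnit_iff_isUnit_det _).mp hAAt),
      Matrix.one_mulVec]
  have h := congrArg (fun v => (y1 - y') ⬝ᵥ v) hAAty
  simp only [amap_dot, dotProduct_neg, dotProduct_add, dotProduct_smul,
    dotProduct_sub, sub_dotProduct, smul_eq_mul, aadj_sub] at h
  -- the master identity
  have hsqW := minner_self_nonneg (γ • (X1 - Xk) + (Sk - S1))
  have master : (γ / 2 * (minner (Xk - X') (Xk - X') - minner (X1 - X') (X1 - X'))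
        + 1 / (2 * γ) * (minner (Aadj A y' + Sk - C) (Aadj A y' + Sk - C)
            - minner (Aadj A y' + S1 - C) (Aadj A y' + S1 - C)))
      - (-(y1 ⬝ᵥ b) + minner X' (Aadj A y1 + S1 - C) + y' ⬝ᵥ b
          - minner X1 (Aadj A y' + S' - C))
      = minner X1 (S' - S1)
        + 1 / (2 * γ) * minner (γ • (X1 - Xk) + (Sk - S1)) (γ • (X1 - Xk) + (Sk - S1)) := by
    rw [hy1] at h ⊢
    simp only [minner_add_left, minner_add_right, minner_sub_left, minner_sub_right,
      minner_smul_left, minner_smul_right, minner_comm] at h ⊢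
    field_simp
    linear_combination (-2 : ℝ) * h
  rw [gapQ, dotProduct_comm b y1, dotProduct_comm b y', ← sub_nonneg]
  simp only [frob_sq]
  have hpos : 0 ≤ 1 / (2 * γ) * minner (γ • (X1 - Xk) + (Sk - S1))
      (γ • (X1 - Xk) + (Sk - S1)) :=
    mul_nonneg (by positivity) hsqW
  linarith [master, hproj', hpos]

end QADMM
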